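/- Fix w ∈ W and assume k is algebraically closed. Let H_w = {(h_1,…,h_n) ∈ H : h_j = 1 for all j ∉ w}. Assume G_w ⊇ H_w and that G_w/H_w is a Zariski-closed subgroup of H/H_w. Then for M, M' ∈ max_w R, one has (M : 𝒢) = (M' : 𝒢) if and only if M' = g(M) for some g ∈ G_w; that is, the fibers of the map max_w R → 𝒢-max_w R, M ↦ (M : 𝒢), are exactly the G_w-orbits in max_w R. -/

import Mathlib

/-!
Over an algebraically closed field every `M ∈ max_w R` is the ideal of a point `a` whose zero
coordinates are exactly those in `w`, and `(M : G_w)` is the ideal of polynomials vanishing on the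
orbit `G_w • a`. So `(M : G_w) = (M' : G_w)` puts `a'` in the Zariski closure of `G_w • a`. Because
`H_w ⊆ G_w`, rescaling the coordinates outside `w` by `a` carries this orbit onto the points of
`G_w` equal to `1` on `w`, a closed set by hypothesis; hence the orbit is closed and contains `a'`.
-/

open MvPolynomial

/-- The action of `h ∈ (kˣ)ⁿ` on `k[y₁,…,yₙ]` by `yᵢ ↦ hᵢ yᵢ`. -/
noncomputable def tact {k : Type*} [CommSemiring k] {n : ℕ} (h : Fin n → kˣ) :
    MvPolynomial (Fin n) k →ₐ[k] MvPolynomial (Fin n) k :=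
  aeval fun i => (h i : k) • X i

/-- `(I : G) = ⋂_{g ∈ G} g(I)` for a subgroup `G` of the torus `(kˣ)ⁿ`. -/
noncomputable def resT {k : Type*} [CommSemiring k] {n : ℕ} (G : Subgroup (Fin n → kˣ))
    (I : Ideal (MvPolynomial (Fin n) k)) : Ideal (MvPolynomial (Fin n) k) :=
  ⨅ g ∈ G, Ideal.comap (tact g) I

/-- `spec_w R`: primes `P` with `P ∩ {y₁,…,yₙ} = {yᵢ : i ∈ w}`. -/
def specW (k : Type*) [CommSemiring k] {n : ℕ} (w : Set (Fin n)) :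
    Set (Ideal (MvPolynomial (Fin n) k)) :=
  {P | P.IsPrime ∧ ∀ i, X i ∈ P ↔ i ∈ w}

/-- `max_w R = max R ∩ spec_w R`. -/
def maxW (k : Type*) [CommSemiring k] {n : ℕ} (w : Set (Fin n)) :
    Set (Ideal (MvPolynomial (Fin n) k)) :=
  {M | M.IsMaximal ∧ ∀ i, X i ∈ M ↔ i ∈ w}

/-- `𝒢-spec_w R = {(P : G_w) : P ∈ spec_w R}`. -/
def GspecW {k : Type*} [CommSemiring k] {n : ℕ}
    (G : Set (Fin n) → Subgroup (Fin n → kˣ)) (w : Set (Fin n)) :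
    Set (Ideal (MvPolynomial (Fin n) k)) :=
  {Q | ∃ P ∈ specW k w, Q = resT (G w) P}

/-- `𝒢-spec R`, the set of `𝒢`-prime ideals. -/
def GspecAll {k : Type*} [CommSemiring k] {n : ℕ}
    (G : Set (Fin n) → Subgroup (Fin n → kˣ)) :
    Set (Ideal (MvPolynomial (Fin n) k)) :=
  ⋃ w, GspecW G w

/-- `𝒢`-semiprime ideals: intersections of collections of `𝒢`-prime ideals. -/
def GSemiprime {k : Type*} [CommSemiring k] {n : ℕ}
    (G : Set (Fin n) → Subgroup (Fin n → kˣ))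
    (J : Ideal (MvPolynomial (Fin n) k)) : Prop :=
  ∃ T ⊆ GspecAll G, J = sInf T

/-- `𝒢-max_w R = {(M : G_w) : M ∈ max_w R}`. -/
def GmaxW {k : Type*} [CommSemiring k] {n : ℕ}
    (G : Set (Fin n) → Subgroup (Fin n → kˣ)) (w : Set (Fin n)) :
    Set (Ideal (MvPolynomial (Fin n) k)) :=
  {Q | ∃ M ∈ maxW k w, Q = resT (G w) M}

/-- `𝒢-max R`. -/
def GmaxAll {k : Type*} [CommSemiring k] {n : ℕ}
    (G : Set (Fin n) → Subgroup (Fin n → kˣ)) :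
    Set (Ideal (MvPolynomial (Fin n) k)) :=
  ⋃ w, GmaxW G w

/-- `P ↦ (P : 𝒢)`, i.e. `(P : G_w)` where `w = {i : yᵢ ∈ P}`. -/
noncomputable def Gquot {k : Type*} [CommSemiring k] {n : ℕ}
    (G : Set (Fin n) → Subgroup (Fin n → kˣ))
    (P : Ideal (MvPolynomial (Fin n) k)) : Ideal (MvPolynomial (Fin n) k) :=
  resT (G {i | X i ∈ P}) P

section TorusAction

variable {k : Type*} {n : ℕ}

lemma eval_aeval [CommSemiring k] {σ τ : Type*} (s : σ → MvPolynomial τ k) (x : τ → k)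
    (f : MvPolynomial σ k) :
    eval x (aeval s f) = eval (fun i => eval x (s i)) f :=
  comp_aeval_apply s (aeval x) f

lemma eval_tact [CommSemiring k] (g : Fin n → kˣ) (x : Fin n → k) (f : MvPolynomial (Fin n) k) :
    eval x (tact g f) = eval (g • x) f := by
  rw [tact, eval_aeval]
  congr 2 with i
  simp [Units.smul_def, smul_eq_C_mul]

lemma tact_mul [CommSemiring k] (g g' : Fin n → kˣ) :
    tact (g * g') = (tact g).comp (tact g' : MvPolynomial (Fin n) k →ₐ[k] _) := by
  apply MvPolynomial.algHom_ext
  intro i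
  simp [tact, smul_smul, mul_comm]

lemma mem_resT [CommSemiring k] {G : Subgroup (Fin n → kˣ)} {I : Ideal (MvPolynomial (Fin n) k)}
    {f : MvPolynomial (Fin n) k} :
    f ∈ resT G I ↔ ∀ g ∈ G, tact g f ∈ I := by
  simp [resT]

lemma resT_comap_tact [CommSemiring k] {G : Subgroup (Fin n → kˣ)} {g : Fin n → kˣ} (hg : g ∈ G)
    (I : Ideal (MvPolynomial (Fin n) k)) :
    resT G (Ideal.comap (tact g) I) = resT G I := by
  ext f
  simp only [mem_resT, Ideal.mem_comap, ← AlgHom.comp_apply, ← tact_mul]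
  constructor
  · intro hf h hh
    simpa using hf (g⁻¹ * h) (mul_mem (inv_mem hg) hh)
  · exact fun hf h hh => hf (g * h) (mul_mem hg hh)

lemma comap_tact_vanishingIdeal_singleton [Field k] (g : Fin n → kˣ) (a : Fin n → k) :
    Ideal.comap (tact g) (vanishingIdeal k {a}) = vanishingIdeal k {g • a} := by
  ext f
  simp [eval_tact]

lemma mem_resT_vanishingIdeal_singleton [Field k] {G : Subgroup (Fin n → kˣ)} {a : Fin n → k}
    {f : MvPolynomial (Fin n) k} :
    f ∈ resT G (vanishingIdeal k {a}) ↔ ∀ g ∈ G, eval (g • a) f = 0 := by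
  simp [mem_resT, eval_tact]

lemma eval_eq_zero_of_resT_vanishingIdeal_le [Field k] {G : Subgroup (Fin n → kˣ)}
    {a a' : Fin n → k} (hle : resT G (vanishingIdeal k {a}) ≤ resT G (vanishingIdeal k {a'}))
    {f : MvPolynomial (Fin n) k} (hf : ∀ g ∈ G, eval (g • a) f = 0) : eval a' f = 0 := by
  simpa using mem_resT_vanishingIdeal_singleton.1 (hle (mem_resT_vanishingIdeal_singleton.2 hf)) 1
    (one_mem _)

lemma exists_eq_vanishingIdeal_of_mem_maxW [Field k] [IsAlgClosed k] {w : Set (Fin n)}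
    {M : Ideal (MvPolynomial (Fin n) k)} (hM : M ∈ maxW k w) :
    ∃ a : Fin n → k, (∀ i, a i = 0 ↔ i ∈ w) ∧ M = vanishingIdeal k {a} := by
  obtain ⟨a, rfl⟩ := isMaximal_iff_eq_vanishingIdeal_singleton.1 hM.1
  refine ⟨a, fun i => ?_, rfl⟩
  simpa [mem_vanishingIdeal_singleton_iff] using hM.2 i

end TorusAction

section OrbitClosed

variable {k : Type*} {n : ℕ} {w : Set (Fin n)}

lemma mem_of_mem_of_eqOn_compl [Monoid k] {G : Subgroup (Fin n → kˣ)}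
    (hHw : ∀ h : Fin n → kˣ, (∀ j, j ∉ w → h j = 1) → h ∈ G)
    {g h : Fin n → kˣ} (hg : g ∈ G) (hgh : ∀ j, j ∉ w → h j = g j) : h ∈ G := by
  have hquot : g⁻¹ * h ∈ G := hHw _ fun j hj => by simp [hgh j hj]
  simpa using mul_mem hg hquot

lemma exists_smul_eq_of_forall_eval_eq_zero [Field k] {G : Subgroup (Fin n → kˣ)}
    (hHw : ∀ h : Fin n → kˣ, (∀ j, j ∉ w → h j = 1) → h ∈ G)
    {E : Set (MvPolynomial (Fin n) k)}
    (hE : ∀ h : Fin n → kˣ, (∀ i ∈ w, h i = 1) →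
      (h ∈ G ↔ ∀ f ∈ E, eval (fun i => (h i : k)) f = 0))
    {a a' : Fin n → k} (ha : ∀ i, a i = 0 ↔ i ∈ w) (ha' : ∀ i, a' i = 0 ↔ i ∈ w)
    (hclosure : ∀ f : MvPolynomial (Fin n) k, (∀ g ∈ G, eval (g • a) f = 0) → eval a' f = 0) :
    ∃ g ∈ G, g • a = a' := by
  classical
  have hne : ∀ (b : Fin n → k), (∀ i, b i = 0 ↔ i ∈ w) → ∀ i, i ∉ w → b i ≠ 0 :=
    fun b hb i hi h0 => hi ((hb i).1 h0)
  let g : Fin n → kˣ := fun i =>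
    if hi : i ∈ w then 1 else Units.mk0 (a' i / a i) (div_ne_zero (hne a' ha' i hi) (hne a ha i hi))
  have hga : g • a = a' := funext fun i => by
    by_cases hi : i ∈ w
    · simp [g, hi, (ha i).2 hi, (ha' i).2 hi]
    · simp [g, hi, Units.smul_def, div_mul_cancel₀ _ (hne a ha i hi)]
  refine ⟨g, ?_, hga⟩
  rw [hE g fun i hi => dif_pos hi]
  intro f hf
  -- `x ↦ (1 on w, x / a off w)` maps the orbit `G • a` into `G`, and `a'` to `g`
  let normalize : Fin n → MvPolynomial (Fin n) k := fun i => if i ∈ w then 1 else C (a i)⁻¹ * X i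
  have eval_normalize : ∀ x : Fin n → k,
      (fun i => eval x (normalize i)) = fun i => if i ∈ w then 1 else x i / a i := by
    intro x
    ext i
    by_cases hi : i ∈ w <;> simp [normalize, hi, div_eq_inv_mul]
  have hvanish := hclosure (aeval normalize f) fun g' hg' => by
    let u : Fin n → kˣ := fun i => if i ∈ w then 1 else g' i
    have hu : u ∈ G := mem_of_mem_of_eqOn_compl hHw hg' fun j hj => if_neg hj
    rw [eval_aeval, eval_normalize]
    convert (hE u fun i hi => if_pos hi).1 hu f hf using 3
    funext i
    by_cases hi : i ∈ w
    · simp [u, hi]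
    · simp [u, hi, Units.smul_def, mul_div_cancel_right₀ _ (hne a ha i hi)]
  rw [eval_aeval, eval_normalize] at hvanish
  convert hvanish using 3
  funext i
  by_cases hi : i ∈ w <;> simp [g, hi]

end OrbitClosed

theorem stmt_12_general {k : Type*} [Field k] [IsAlgClosed k] {n : ℕ}
    (G : Set (Fin n) → Subgroup (Fin n → kˣ))
    (w : Set (Fin n))
    -- `H_w ⊆ G_w`, where `H_w = {h ∈ H : h_j = 1 for all j ∉ w}`
    (hHw : ∀ h : Fin n → kˣ, (∀ j, j ∉ w → h j = 1) → h ∈ G w)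
    -- `G_w/H_w` is a Zariski-closed subgroup of `H/H_w`
    (hclosed : ∃ E : Set (MvPolynomial (Fin n) k), ∀ h : Fin n → kˣ,
      (∀ i ∈ w, h i = 1) →
      (h ∈ G w ↔ ∀ f ∈ E, eval (fun i => (h i : k)) f = 0)) :
    ∀ M ∈ maxW k w, ∀ M' ∈ maxW k w,
      (resT (G w) M = resT (G w) M' ↔ ∃ g ∈ G w, M' = Ideal.comap (tact g) M) := by
  intro M hM M' hM'
  obtain ⟨a, ha, rfl⟩ := exists_eq_vanishingIdeal_of_mem_maxW hM
  obtain ⟨a', ha', rfl⟩ := exists_eq_vanishingIdeal_of_mem_maxW hM'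
  obtain ⟨E, hE⟩ := hclosed
  constructor
  · intro hres
    obtain ⟨g, hg, rfl⟩ := exists_smul_eq_of_forall_eval_eq_zero hHw hE ha ha' fun _ =>
      eval_eq_zero_of_resT_vanishingIdeal_le hres.le
    exact ⟨g, hg, (comap_tact_vanishingIdeal_singleton g a).symm⟩
  · rintro ⟨g, hg, hM'_eq⟩
    rw [hM'_eq, resT_comap_tact hg]

/-- Proposition 2.7: fix `w`, `k` algebraically closed; assume
`H_w ⊆ G_w` and `G_w/H_w` is Zariski closed in `H/H_w` (expressed via the natural
identification of `H/H_w` with the subtorus `{h : hᵢ = 1 for i ∈ w}`, whose closed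
subsets are cut out by polynomials).  Then the fibers of `M ↦ (M : 𝒢)` on `max_w R`
are exactly the `G_w`-orbits. -/
theorem stmt_12 {k : Type*} [Field k] [IsAlgClosed k] {n : ℕ}
    (G : Set (Fin n) → Subgroup (Fin n → kˣ))
    (hcompat : ∀ v w : Set (Fin n), v ⊆ w → ∀ P ∈ specW k w,
      resT (G v) P ≤ resT (G w) P)
    (w : Set (Fin n))
    -- `H_w ⊆ G_w`, where `H_w = {h ∈ H : h_j = 1 for all j ∉ w}`
    (hHw : ∀ h : Fin n → kˣ, (∀ j, j ∉ w → h j = 1) → h ∈ G w)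
    -- `G_w/H_w` is a Zariski-closed subgroup of `H/H_w`
    (hclosed : ∃ E : Set (MvPolynomial (Fin n) k), ∀ h : Fin n → kˣ,
      (∀ i ∈ w, h i = 1) →
      (h ∈ G w ↔ ∀ f ∈ E, eval (fun i => (h i : k)) f = 0)) :
    ∀ M ∈ maxW k w, ∀ M' ∈ maxW k w,
      (resT (G w) M = resT (G w) M' ↔ ∃ g ∈ G w, M' = Ideal.comap (tact g) M) :=
  stmt_12_general G w hHw hclosed
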